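/- arXiv:0709.3011 — 3 statements merged into one kernel-verified Lean document; each statement's English description precedes it below -/
import Mathlib

section
/- The function B(α) = π · α^(1/(2(α-1))) · α̃^(1/(2(α̃-1))), where α̃ = α/(2α-1), is strictly increasing on (1/2, 1) and strictly decreasing on (1, ∞), with limit 2π as α → 1/2⁺, limit eπ as α → 1, and limit 2π as α → ∞. -/
/-!
With `t = 2α - 1` one finds `B(α) = 2π · t^(t/(t-1)) / (t + 1)`, that is
`B(α) = 2π · exp (logB t)` with `logB t = t log t / (t - 1) - log (t + 1)`.
The derivative of `logB` is `-ψ(t) / (t - 1)²`, where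
`ψ(t) = logPadeGap t = log t - 2(t - 1)/(t + 1)`. Since `ψ(1) = 0` and
`ψ'(t) = (t - 1)² / (t (t + 1)²)`, `ψ` has the sign of `t - 1`, which gives the monotonicity.
The three limits are those of `logB` at `t → 0⁺` (continuity, as `t log t → 0`), at `t → 1`
(`t log t / (t - 1)` tends to the derivative `1` of `t log t` at `1`) and at `t → ∞`.
-/

open Filter

/-- The conjugate index `α̃ = α/(2α-1)`. -/
noncomputable def tildeIdx (α : ℝ) : ℝ := α / (2*α - 1)

/-- `B(α) = π · α^(1/(2(α-1))) · α̃^(1/(2(α̃-1)))`. -/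
noncomputable def Bfun (α : ℝ) : ℝ :=
  Real.pi * α ^ (1/(2*(α-1))) * (tildeIdx α) ^ (1/(2*(tildeIdx α - 1)))

open Real Set Topology

noncomputable def logPadeGap (t : ℝ) : ℝ := log t - 2 * (t - 1) / (t + 1)

lemma hasDerivAt_logPadeGap {t : ℝ} (ht : 0 < t) :
    HasDerivAt logPadeGap ((t - 1) ^ 2 / (t * (t + 1) ^ 2)) t := by
  have hquot : HasDerivAt (fun x : ℝ => 2 * (x - 1) / (x + 1)) (4 / (t + 1) ^ 2) t := by
    refine ((((hasDerivAt_id t).sub_const 1).const_mul 2).div ((hasDerivAt_id t).add_const 1)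
      (by positivity)).congr_deriv ?_
    simp only [id]
    ring
  refine ((hasDerivAt_log ht.ne').sub hquot).congr_deriv ?_
  field_simp
  ring

lemma strictMonoOn_logPadeGap : StrictMonoOn logPadeGap (Ioi 0) := by
  have of_one_notMem_interior {D : Set ℝ} (hD : Convex ℝ D) (hpos : D ⊆ Ioi 0)
      (h1 : (1 : ℝ) ∉ interior D) : StrictMonoOn logPadeGap D :=
    strictMonoOn_of_hasDerivWithinAt_pos hD
      (fun x hx => (hasDerivAt_logPadeGap (hpos hx)).continuousAt.continuousWithinAt)
      (fun x hx => (hasDerivAt_logPadeGap (hpos (interior_subset hx))).hasDerivWithinAt)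
      (fun x hx => by
        have hx0 : 0 < x := hpos (interior_subset hx)
        exact div_pos (sq_pos_of_ne_zero (sub_ne_zero.2 (ne_of_mem_of_not_mem hx h1)))
          (by positivity))
  rw [← Ioc_union_Ici_eq_Ioi zero_lt_one]
  exact (of_one_notMem_interior (convex_Ioc 0 1) Ioc_subset_Ioi_self (by simp)).union
    (of_one_notMem_interior (convex_Ici 1) (Ici_subset_Ioi.2 zero_lt_one) (by simp))
    (isGreatest_Ioc zero_lt_one) isLeast_Ici

lemma logPadeGap_one : logPadeGap 1 = 0 := by norm_num [logPadeGap]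

noncomputable def logB (t : ℝ) : ℝ := t * log t / (t - 1) - log (t + 1)

lemma hasDerivAt_logB {t : ℝ} (ht : 0 < t) (ht1 : t ≠ 1) :
    HasDerivAt logB (-logPadeGap t / (t - 1) ^ 2) t := by
  have hsub : t - 1 ≠ 0 := sub_ne_zero.2 ht1
  refine (((hasDerivAt_mul_log ht.ne').div ((hasDerivAt_id t).sub_const 1) hsub).sub
    ((hasDerivAt_log (by positivity)).comp t ((hasDerivAt_id t).add_const 1))).congr_deriv ?_
  simp only [id, logPadeGap]
  field_simp
  ring

lemma strictMonoOn_logB : StrictMonoOn logB (Ioo 0 1) := by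
  refine strictMonoOn_of_hasDerivWithinAt_pos (f' := fun t => -logPadeGap t / (t - 1) ^ 2)
    (convex_Ioo 0 1)
    (fun t ht => (hasDerivAt_logB ht.1 ht.2.ne).continuousAt.continuousWithinAt) ?_ ?_ <;>
    rw [interior_Ioo] <;> intro t ht
  · exact (hasDerivAt_logB ht.1 ht.2.ne).hasDerivWithinAt
  · have hgap : logPadeGap t < 0 :=
      logPadeGap_one ▸ strictMonoOn_logPadeGap ht.1 (mem_Ioi.2 one_pos) ht.2
    exact div_pos (neg_pos.2 hgap) (sq_pos_of_ne_zero (sub_ne_zero.2 ht.2.ne))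

lemma strictAntiOn_logB : StrictAntiOn logB (Ioi 1) := by
  refine strictAntiOn_of_hasDerivWithinAt_neg (f' := fun t => -logPadeGap t / (t - 1) ^ 2)
    (convex_Ioi 1)
    (fun t (ht : 1 < t) => (hasDerivAt_logB (by linarith) ht.ne').continuousAt.continuousWithinAt)
    ?_ ?_ <;> rw [interior_Ioi] <;> intro t (ht : 1 < t)
  · exact (hasDerivAt_logB (by linarith) ht.ne').hasDerivWithinAt
  · have hgap : 0 < logPadeGap t :=
      logPadeGap_one ▸
        strictMonoOn_logPadeGap (mem_Ioi.2 one_pos) (mem_Ioi.2 (one_pos.trans ht)) ht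
    exact div_neg_of_neg_of_pos (neg_neg_of_pos hgap) (sq_pos_of_ne_zero (sub_ne_zero.2 ht.ne'))

lemma tendsto_logB_zero : Tendsto logB (𝓝[>] 0) (𝓝 0) := by
  have hcont : ContinuousAt logB 0 :=
    (continuous_mul_log.continuousAt.div (by fun_prop) (by norm_num)).sub
      ((continuousAt_log (by norm_num)).comp (by fun_prop))
  simpa [logB] using hcont.tendsto.mono_left nhdsWithin_le_nhds

lemma tendsto_logB_one : Tendsto logB (𝓝[≠] 1) (𝓝 (1 - log 2)) := by
  have hslope : Tendsto (fun t => t * log t / (t - 1)) (𝓝[≠] 1) (𝓝 1) := by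
    have h := (hasDerivAt_mul_log one_ne_zero).tendsto_slope
    rw [log_one, zero_add] at h
    exact h.congr fun t => by simp [slope_def_field]
  have hlog : Tendsto (fun t => log (t + 1)) (𝓝[≠] 1) (𝓝 (log 2)) := by
    have h : ContinuousAt (fun t => log (t + 1)) 1 :=
      (continuousAt_log (by norm_num)).comp (by fun_prop)
    simpa [one_add_one_eq_two] using h.tendsto.mono_left nhdsWithin_le_nhds
  exact hslope.sub hlog

lemma logB_eq_of_one_lt {t : ℝ} (ht : 1 < t) :
    logB t = log t / (t - 1) - log (1 + t⁻¹) := by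
  have ht0 : t ≠ 0 := by positivity
  have hsub : t - 1 ≠ 0 := sub_ne_zero.2 ht.ne'
  rw [logB, show t + 1 = t * (1 + t⁻¹) by field_simp, log_mul ht0 (by positivity)]
  field_simp
  ring

lemma tendsto_logB_atTop : Tendsto logB atTop (𝓝 0) := by
  have hfrac : Tendsto (fun t => log t / (t - 1)) atTop (𝓝 0) := by
    simpa [sub_eq_add_neg] using tendsto_pow_log_div_mul_add_atTop 1 (-1) 1 one_ne_zero
  have hlog : Tendsto (fun t => log (1 + t⁻¹)) atTop (𝓝 0) := by
    have h : ContinuousAt (fun s => log (1 + s)) 0 :=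
      (continuousAt_log (by norm_num)).comp (by fun_prop)
    simpa [Function.comp_def] using h.tendsto.comp tendsto_inv_atTop_zero
  have hdiff : Tendsto (fun t => log t / (t - 1) - log (1 + t⁻¹)) atTop (𝓝 0) := by
    simpa using hfrac.sub hlog
  refine hdiff.congr' ?_
  filter_upwards [eventually_gt_atTop 1] with t ht
  exact (logB_eq_of_one_lt ht).symm

lemma Bfun_eq_two_pi_mul_exp_logB {α : ℝ} (hα : 1 / 2 < α) (hα1 : α ≠ 1) :
    Bfun α = 2 * π * exp (logB (2 * α - 1)) := by
  have hpos : 0 < α := by linarith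
  have ht : 0 < 2 * α - 1 := by linarith
  have htsub : 2 * α - 1 - 1 ≠ 0 := by contrapose! hα1; linarith
  have hexponent : log α * (1 / (2 * (α - 1))) +
        (log α - log (2 * α - 1)) * (1 / (2 * (α / (2 * α - 1) - 1))) =
      logB (2 * α - 1) + log 2 := by
    rw [logB, show 2 * α - 1 + 1 = 2 * α by ring, log_mul two_ne_zero hpos.ne',
      show α / (2 * α - 1) - 1 = (1 - α) / (2 * α - 1) by rw [div_sub_one ht.ne']; ring]
    field_simp
    ring
  rw [Bfun, tildeIdx, rpow_def_of_pos hpos, rpow_def_of_pos (div_pos hpos ht),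
    log_div hpos.ne' ht.ne', mul_assoc, ← exp_add, hexponent, exp_add, exp_log two_pos]
  ring

lemma Bfun_strictMonoOn : StrictMonoOn Bfun (Ioo (1 / 2) 1) := by
  intro x hx y hy hxy
  rw [Bfun_eq_two_pi_mul_exp_logB hx.1 hx.2.ne, Bfun_eq_two_pi_mul_exp_logB hy.1 hy.2.ne]
  have hlogB : logB (2 * x - 1) < logB (2 * y - 1) :=
    strictMonoOn_logB ⟨by linarith [hx.1], by linarith [hx.2]⟩
      ⟨by linarith [hy.1], by linarith [hy.2]⟩ (by linarith)
  gcongr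

lemma Bfun_strictAntiOn : StrictAntiOn Bfun (Ioi 1) := by
  intro x (hx : 1 < x) y (hy : 1 < y) hxy
  rw [Bfun_eq_two_pi_mul_exp_logB (by linarith) hx.ne',
    Bfun_eq_two_pi_mul_exp_logB (by linarith) hy.ne']
  have hlogB : logB (2 * y - 1) < logB (2 * x - 1) :=
    strictAntiOn_logB (show 1 < 2 * x - 1 by linarith) (show 1 < 2 * y - 1 by linarith)
      (by linarith)
  gcongr

lemma tendsto_Bfun {l l' : Filter ℝ} {c : ℝ} (hl : ∀ᶠ α in l, 1 / 2 < α ∧ α ≠ 1)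
    (hmap : Tendsto (fun α => 2 * α - 1) l l') (hc : Tendsto logB l' (𝓝 c)) :
    Tendsto Bfun l (𝓝 (2 * π * exp c)) :=
  (((hc.comp hmap).rexp).const_mul (2 * π)).congr'
    (hl.mono fun _ h => (Bfun_eq_two_pi_mul_exp_logB h.1 h.2).symm)

lemma tendsto_two_mul_sub_one_nhdsWithin {a b : ℝ} {s t : Set ℝ}
    (hs : MapsTo (fun α => 2 * α - 1) s t) (hb : 2 * a - 1 = b) :
    Tendsto (fun α => 2 * α - 1) (𝓝[s] a) (𝓝[t] b) := by
  have hcont : Continuous fun α : ℝ => 2 * α - 1 := by fun_prop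
  exact hb ▸ hcont.continuousWithinAt.tendsto_nhdsWithin hs

/-- `B` is strictly increasing on `(1/2,1)`, strictly decreasing on `(1,∞)`,
tends to `2π` as `α → 1/2⁺`, to `eπ` as `α → 1`, and to `2π` as `α → ∞`. -/
theorem Bfun_monotonicity_and_limits :
    StrictMonoOn Bfun (Set.Ioo (1/2 : ℝ) 1) ∧
    StrictAntiOn Bfun (Set.Ioi (1 : ℝ)) ∧
    Tendsto Bfun (nhdsWithin (1/2 : ℝ) (Set.Ioi (1/2 : ℝ))) (nhds (2 * Real.pi)) ∧
    Tendsto Bfun (nhdsWithin (1 : ℝ) {x : ℝ | x ≠ 1}) (nhds (Real.exp 1 * Real.pi)) ∧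
    Tendsto Bfun atTop (nhds (2 * Real.pi)) := by
  refine ⟨Bfun_strictMonoOn, Bfun_strictAntiOn, ?_, ?_, ?_⟩
  · have hl : ∀ᶠ α in 𝓝[>] (1 / 2 : ℝ), 1 / 2 < α ∧ α ≠ 1 :=
      mem_of_superset (Ioo_mem_nhdsGT (by norm_num)) fun α hα => ⟨hα.1, hα.2.ne⟩
    have hmap : MapsTo (fun α : ℝ => 2 * α - 1) (Ioi (1 / 2)) (Ioi 0) :=
      fun α (hα : 1 / 2 < α) => show 0 < 2 * α - 1 by linarith
    simpa using tendsto_Bfun hl (tendsto_two_mul_sub_one_nhdsWithin hmap (by norm_num))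
      tendsto_logB_zero
  · have hl : ∀ᶠ α in 𝓝[≠] (1 : ℝ), 1 / 2 < α ∧ α ≠ 1 :=
      (eventually_nhdsWithin_of_eventually_nhds (eventually_gt_nhds (by norm_num))).and
        self_mem_nhdsWithin
    have hlim : 2 * π * exp (1 - log 2) = exp 1 * π := by
      rw [exp_sub, exp_log two_pos]
      ring
    have hmap : MapsTo (fun α : ℝ => 2 * α - 1) {x | x ≠ 1} {1}ᶜ :=
      fun α (hα : α ≠ 1) => show 2 * α - 1 ≠ 1 by contrapose! hα; linarith
    exact hlim ▸ tendsto_Bfun hl (tendsto_two_mul_sub_one_nhdsWithin hmap (by norm_num))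
      tendsto_logB_one
  · have hl : ∀ᶠ α : ℝ in atTop, 1 / 2 < α ∧ α ≠ 1 :=
      (eventually_gt_atTop 1).mono fun α hα => ⟨by linarith, hα.ne'⟩
    simpa using tendsto_Bfun hl
      (tendsto_atTop_add_const_right _ (-1) (tendsto_id.const_mul_atTop two_pos))
      tendsto_logB_atTop
end

section
/- For the one-dimensional Student-t wavefunction Ψ_ν(x) = C_ν (1 + x²)^{-(1+ν)/4} with normalization C_ν = (Γ((1+ν)/2)/(√π Γ(ν/2)))^{1/2}, the Rényi α-entropy power of the density |Ψ_ν|² equals N_α = √π · (Γ^α((1+ν)/2) / Γ(α(1+ν)/2))^{1/(1-α)} · (Γ((α(1+ν)-1)/2) / Γ^α(ν/2))^{1/(1-α)}, valid for α ≠ 1 and ν > max(0, (1-α)/α). -/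
/-!
Since `|Ψ_ν|^{2α} = C_ν^{2α} (1 + x²)^{-s}` with `s = α(1+ν)/2`, everything reduces to
`∫ (1 + x²)^{-s} dx = √π Γ(s - 1/2) / Γ(s)` for `s > 1/2`, which is exactly the condition
on `ν`. That integral is computed by writing `(1 + x²)^{-s} Γ(s)` as
`∫₀^∞ t^{s-1} e^{-(1+x²)t} dt` and exchanging the order of integration: the inner
`x`-integral is Gaussian, `√(π/t) e^{-t} t^{s-1}`, and what remains is `√π Γ(s - 1/2)`.
-/

open MeasureTheory Real Set

lemma integral_rpow_mul_exp_neg_one_add_sq_mul {s : ℝ} (hs : 0 < s) (x : ℝ) :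
    ∫ t in Ioi (0 : ℝ), t ^ (s - 1) * exp (-((1 + x ^ 2) * t)) =
      (1 + x ^ 2) ^ (-s) * Gamma s := by
  rw [integral_rpow_mul_exp_neg_mul_Ioi hs (by positivity), one_div, inv_rpow (by positivity),
    rpow_neg (by positivity)]

lemma integral_exp_neg_one_add_sq_mul {t : ℝ} (ht : 0 < t) :
    ∫ x : ℝ, exp (-((1 + x ^ 2) * t)) = √π * t ^ (-(1 / 2 : ℝ)) * exp (-t) := by
  have hsplit (x : ℝ) : exp (-((1 + x ^ 2) * t)) = exp (-t) * exp (-t * x ^ 2) := by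
    rw [← exp_add]; ring_nf
  simp_rw [hsplit, integral_const_mul, integral_gaussian, sqrt_div' _ ht.le, sqrt_eq_rpow t,
    rpow_neg ht.le]
  ring

lemma integrable_one_add_sq_rpow_neg {s : ℝ} (hs : 1 / 2 < s) :
    Integrable fun x : ℝ => (1 + x ^ 2) ^ (-s) := by
  have h := integrable_rpow_neg_one_add_norm_sq (E := ℝ) (μ := volume) (r := 2 * s)
    (by rw [Module.finrank_self, Nat.cast_one]; linarith)
  simpa only [norm_eq_abs, sq_abs, show -(2 * s) / 2 = -s by ring] using h

lemma integral_one_add_sq_rpow_neg {s : ℝ} (hs : 1 / 2 < s) :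
    ∫ x : ℝ, (1 + x ^ 2) ^ (-s) = √π * Gamma (s - 1 / 2) / Gamma s := by
  have hs0 : 0 < s := by linarith
  set f : ℝ → ℝ → ℝ := fun x t => t ^ (s - 1) * exp (-((1 + x ^ 2) * t))
  have hf_nonneg : ∀ x, ∀ t ∈ Ioi (0 : ℝ), 0 ≤ f x t := fun x t ht =>
    mul_nonneg (rpow_nonneg ht.le _) (exp_nonneg _)
  have hf_int : Integrable (Function.uncurry f) (volume.prod (volume.restrict (Ioi 0))) := by
    refine (integrable_prod_iff (by fun_prop)).2 ⟨.of_forall fun x => ?_, ?_⟩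
    · simpa only [f, Function.uncurry_apply_pair, IntegrableOn, rpow_one, neg_mul] using
        integrableOn_rpow_mul_exp_neg_mul_rpow (p := 1) (by linarith) one_pos
          (by positivity : (0 : ℝ) < 1 + x ^ 2)
    · have hnorm (x : ℝ) :
          ∫ t in Ioi (0 : ℝ), ‖f x t‖ = (1 + x ^ 2) ^ (-s) * Gamma s := by
        rw [← integral_rpow_mul_exp_neg_one_add_sq_mul hs0 x]
        exact setIntegral_congr_fun measurableSet_Ioi fun t ht => norm_of_nonneg (hf_nonneg x t ht)
      simpa only [Function.uncurry_apply_pair, hnorm] using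
        (integrable_one_add_sq_rpow_neg hs).mul_const (Gamma s)
  have hx_first : ∫ t in Ioi (0 : ℝ), ∫ x : ℝ, f x t = √π * Gamma (s - 1 / 2) := by
    have hinner :
        ∀ t ∈ Ioi (0 : ℝ), ∫ x : ℝ, f x t = √π * (exp (-t) * t ^ (s - 1 / 2 - 1)) :=
      fun t ht => by
        rw [integral_const_mul, integral_exp_neg_one_add_sq_mul ht,
          show s - 1 / 2 - 1 = (s - 1) + -(1 / 2) by ring, rpow_add ht]
        ring
    rw [setIntegral_congr_fun measurableSet_Ioi hinner, integral_const_mul,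
      ← Gamma_eq_integral (by linarith)]
  have ht_first :
      ∫ x : ℝ, ∫ t in Ioi (0 : ℝ), f x t = (∫ x : ℝ, (1 + x ^ 2) ^ (-s)) * Gamma s := by
    simp_rw [f, integral_rpow_mul_exp_neg_one_add_sq_mul hs0, integral_mul_const]
  rw [eq_div_iff (Gamma_pos_of_pos hs0).ne', ← ht_first, integral_integral_swap hf_int, hx_first]

lemma div_rpow_mul_div_rpow_one_div_one_sub {α p a b c d : ℝ} (hα : α ≠ 1) (hp : 0 < p)
    (ha : 0 ≤ a) (hb : 0 < b) (hc : 0 ≤ c) (hd : 0 ≤ d) :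
    ((a / (p * b)) ^ α * (p * c / d)) ^ (1 / (1 - α)) =
      p * (a ^ α / d) ^ (1 / (1 - α)) * (c / b ^ α) ^ (1 / (1 - α)) := by
  have hregroup :
      (a / (p * b)) ^ α * (p * c / d) = p ^ (1 - α) * ((a ^ α / d) * (c / b ^ α)) := by
    rw [div_rpow ha (by positivity), mul_rpow hp.le hb.le, rpow_sub hp, rpow_one]
    have := (rpow_pos_of_pos hp α).ne'
    have := (rpow_pos_of_pos hb α).ne'
    field_simp
  rw [hregroup, mul_rpow (by positivity) (by positivity), ← rpow_mul hp.le,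
    mul_one_div_cancel (sub_ne_zero.2 hα.symm), rpow_one, mul_rpow (by positivity) (by positivity),
    mul_assoc]

/-- Rényi `α`-entropy power of the density `|Ψ_ν|²` of the one-dimensional
Student-t wavefunction, expressed through Gamma functions. -/
theorem student_t_entropy_power (ν α : ℝ) (hα : 0 < α) (hα1 : α ≠ 1)
    (hν : max 0 ((1 - α)/α) < ν)
    (Ψ : ℝ → ℝ)
    (hΨ : Ψ = fun x => Real.sqrt (Real.Gamma ((1+ν)/2) / (Real.sqrt π * Real.Gamma (ν/2)))
      * (1 + x ^ 2) ^ (-((1+ν)/4))) :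
    (∫ x, |Ψ x| ^ (2 * α)) ^ (1/(1-α)) =
      Real.sqrt π * (Real.Gamma ((1+ν)/2) ^ α / Real.Gamma (α * (1+ν)/2)) ^ (1/(1-α))
        * (Real.Gamma ((α * (1+ν) - 1)/2) / Real.Gamma (ν/2) ^ α) ^ (1/(1-α)) := by
  obtain ⟨hν0, hνα⟩ := max_lt_iff.1 hν
  have hs : 1 / 2 < α * (1 + ν) / 2 := by
    have := (div_lt_iff₀ hα).1 hνα
    nlinarith
  set C := Gamma ((1 + ν) / 2) / (√π * Gamma (ν / 2))
  have hC : 0 ≤ C := by positivity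
  have hpow (x : ℝ) : |Ψ x| ^ (2 * α) = C ^ α * (1 + x ^ 2) ^ (-(α * (1 + ν) / 2)) := by
    have hx : (0 : ℝ) ≤ 1 + x ^ 2 := by positivity
    rw [hΨ, abs_of_nonneg (by positivity), mul_rpow (sqrt_nonneg _) (rpow_nonneg hx _),
      rpow_mul (sqrt_nonneg _), ← rpow_mul hx, rpow_two, sq_sqrt hC]
    ring_nf
  rw [funext hpow, integral_const_mul, integral_one_add_sq_rpow_neg hs,
    show α * (1 + ν) / 2 - 1 / 2 = (α * (1 + ν) - 1) / 2 by ring]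
  have hs' : 0 < (α * (1 + ν) - 1) / 2 := by linarith
  exact div_rpow_mul_div_rpow_one_div_one_sub hα1 (by positivity) (by positivity) (by positivity)
    (by positivity) (by positivity)
end

section
/- For the normalized exponential (Laplace-type) wavefunction Ψ_E(x) = e^{-|x|} on ℝ (with density |Ψ_E(x)|² = e^{-2|x|}·(normalization)), one has N_2(E)·N_2(Ẽ) = 8π/5, which is strictly less than the Gaussian value N_2(G)·N_2(G̃) = 2π. -/
/-!
Everything is explicit. `∫ e^{-4|x|} = 1/2`, and splitting the Fourier integral at `0` gives
`∫ e^{-ixξ} e^{-|x|} dx = 1/(1 + iξ) + 1/(1 - iξ) = 2/(1 + ξ²)`, so the second integral is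
`(4/π²) ∫ (1 + ξ²)⁻⁴`. Integrating the derivative of `x/(1 + x²)ⁿ` over `ℝ` gives the Wallis-type
recursion `2n Iₙ₊₁ = (2n - 1) Iₙ` for `Iₙ = ∫ (1 + x²)⁻ⁿ`, starting from `I₁ = π`; hence
`Iₙ₊₁ = π C(2n, n)/4ⁿ` and `I₄ = 5π/16`. Altogether the product is `2 · 4π/5 = 8π/5 < 2π`.
-/

open MeasureTheory Filter Set Real

theorem integral_exp_neg_mul_abs {a : ℝ} (ha : 0 < a) :
    ∫ x : ℝ, exp (-(a * |x|)) = 2 / a := by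
  rw [integral_comp_abs (f := fun x => exp (-(a * x)))]
  simp_rw [← neg_mul]
  rw [integral_exp_mul_Ioi (neg_lt_zero.mpr ha)]
  field_simp
  simp

theorem integral_exp_neg_mul_abs_fourier {a : ℝ} (ha : 0 < a) (ξ : ℝ) :
    ∫ x : ℝ, Complex.exp (-(Complex.I * x * ξ)) * (exp (-(a * |x|)) : ℂ) =
      (2 * a / (a ^ 2 + ξ ^ 2) : ℝ) := by
  set f : ℝ → ℂ := fun x => Complex.exp (-(Complex.I * x * ξ)) * (exp (-(a * |x|)) : ℂ)
  have hpos : EqOn f (fun x => Complex.exp ((-a - Complex.I * ξ) * x)) (Ioi 0) := by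
    intro x hx
    simp only [f, abs_of_pos (mem_Ioi.mp hx), Complex.ofReal_exp, ← Complex.exp_add]
    push_cast; ring_nf
  have hneg : EqOn f (fun x => Complex.exp ((a - Complex.I * ξ) * x)) (Iic 0) := by
    intro x hx
    simp only [f, abs_of_nonpos (mem_Iic.mp hx), Complex.ofReal_exp, ← Complex.exp_add]
    push_cast; ring_nf
  have hre_pos : (-a - Complex.I * ξ : ℂ).re < 0 := by simpa using ha
  have hre_neg : 0 < (a - Complex.I * ξ : ℂ).re := by simpa using ha
  rw [← intervalIntegral.integral_Iic_add_Ioi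
      ((integrableOn_exp_mul_complex_Iic hre_neg 0).congr_fun hneg.symm measurableSet_Iic)
      ((integrableOn_exp_mul_complex_Ioi hre_pos 0).congr_fun hpos.symm measurableSet_Ioi),
    setIntegral_congr_fun measurableSet_Iic hneg, setIntegral_congr_fun measurableSet_Ioi hpos,
    integral_exp_mul_complex_Iic hre_neg, integral_exp_mul_complex_Ioi hre_pos]
  have h1 : (a - Complex.I * ξ : ℂ) ≠ 0 := fun h => by simp [h] at hre_neg
  have h2 : (-a - Complex.I * ξ : ℂ) ≠ 0 := fun h => by simp [h] at hre_pos
  have h3 : ((a ^ 2 + ξ ^ 2 : ℝ) : ℂ) ≠ 0 := by exact_mod_cast (by positivity : a ^ 2 + ξ ^ 2 ≠ 0)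
  push_cast at h3 ⊢
  simp only [mul_zero, Complex.exp_zero]
  field_simp
  ring_nf
  simp only [Complex.I_sq]
  ring

theorem hasDerivAt_div_one_add_sq_pow (n : ℕ) (x : ℝ) :
    HasDerivAt (fun x : ℝ => x / (1 + x ^ 2) ^ n)
      ((1 - 2 * n) / (1 + x ^ 2) ^ n + 2 * n / (1 + x ^ 2) ^ (n + 1)) x := by
  have h : HasDerivAt (fun x : ℝ => 1 + x ^ 2) (2 * x) x := by
    simpa using (hasDerivAt_pow 2 x).const_add 1
  have hx : 1 + x ^ 2 ≠ 0 := by positivity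
  refine ((hasDerivAt_id' x).div (h.pow n) (pow_ne_zero n hx)).congr_deriv ?_
  rcases n with _ | n
  · simp
  · simp only [Pi.pow_apply, Nat.add_sub_cancel, pow_succ]
    field_simp
    push_cast
    ring

theorem integrable_inv_one_add_sq_pow {n : ℕ} (hn : n ≠ 0) :
    Integrable fun x : ℝ => ((1 + x ^ 2) ^ n)⁻¹ := by
  refine integrable_inv_one_add_sq.mono' (by fun_prop) (ae_of_all _ fun x => ?_)
  have : (1 : ℝ) ≤ 1 + x ^ 2 := by nlinarith
  rw [norm_inv, norm_pow, Real.norm_of_nonneg (by positivity)]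
  exact inv_anti₀ (by positivity) (le_self_pow₀ this hn)

theorem tendsto_div_one_add_sq_pow {n : ℕ} (hn : n ≠ 0) :
    Tendsto (fun x : ℝ => x / (1 + x ^ 2) ^ n) (cocompact ℝ) (nhds 0) := by
  refine squeeze_zero_norm' ?_ (tendsto_inv_atTop_zero.comp tendsto_norm_cocompact_atTop)
  filter_upwards [(hasBasis_cocompact.eventually_iff).mpr ⟨{0}, isCompact_singleton, fun x hx => hx⟩]
    with x hx
  have hx : 0 < |x| := abs_pos.mpr hx
  have h1 : (1 : ℝ) ≤ 1 + x ^ 2 := by nlinarith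
  rw [Function.comp_apply, Real.norm_eq_abs, Real.norm_eq_abs, abs_div, abs_pow,
    abs_of_pos (by positivity : (0 : ℝ) < 1 + x ^ 2), div_le_iff₀ (by positivity),
    inv_mul_eq_div, le_div_iff₀ hx]
  calc |x| * |x| = x ^ 2 := by rw [← sq, sq_abs]
    _ ≤ 1 + x ^ 2 := by linarith
    _ ≤ (1 + x ^ 2) ^ n := le_self_pow₀ h1 hn

theorem two_mul_integral_inv_one_add_sq_pow_succ {n : ℕ} (hn : n ≠ 0) :
    (2 * n : ℝ) * ∫ x : ℝ, ((1 + x ^ 2) ^ (n + 1))⁻¹ =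
      (2 * n - 1) * ∫ x : ℝ, ((1 + x ^ 2) ^ n)⁻¹ := by
  have hI := integrable_inv_one_add_sq_pow hn
  have hI' := integrable_inv_one_add_sq_pow n.succ_ne_zero
  have h := integral_of_hasDerivAt_of_tendsto (hasDerivAt_div_one_add_sq_pow n)
    ((hI.const_mul _).add (hI'.const_mul _))
    ((tendsto_div_one_add_sq_pow hn).mono_left atBot_le_cocompact)
    ((tendsto_div_one_add_sq_pow hn).mono_left atTop_le_cocompact)
  simp only [div_eq_mul_inv] at h
  rw [integral_add (hI.const_mul _) (hI'.const_mul _), integral_const_mul, integral_const_mul,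
    sub_zero] at h
  linarith

theorem integral_inv_one_add_sq_pow_succ (n : ℕ) :
    ∫ x : ℝ, ((1 + x ^ 2) ^ (n + 1))⁻¹ = π * n.centralBinom / 4 ^ n := by
  induction n with
  | zero => simp [integral_univ_inv_one_add_sq]
  | succ n ih =>
    have h := two_mul_integral_inv_one_add_sq_pow_succ n.succ_ne_zero
    have hc : ((n + 1 : ℕ) : ℝ) * (n + 1).centralBinom = 2 * (2 * n + 1) * n.centralBinom := by
      exact_mod_cast n.succ_mul_centralBinom_succ
    rw [ih] at h
    push_cast at h hc
    apply mul_left_cancel₀ (by positivity : (n + 1 : ℝ) ≠ 0)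
    calc (n + 1 : ℝ) * ∫ x : ℝ, ((1 + x ^ 2) ^ (n + 1 + 1))⁻¹
        = (2 * n + 1) * (π * n.centralBinom / 4 ^ n) / 2 := by linarith
      _ = π * ((n + 1) * (n + 1).centralBinom) / 4 ^ (n + 1) := by rw [hc]; ring
      _ = (n + 1) * (π * (n + 1).centralBinom / 4 ^ (n + 1)) := by ring

theorem integral_inv_one_add_sq_pow_four : ∫ x : ℝ, ((1 + x ^ 2) ^ 4)⁻¹ = 5 * π / 16 := by
  rw [integral_inv_one_add_sq_pow_succ 3]
  norm_num [Nat.centralBinom, Nat.choose]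
  ring

/-- For the normalized exponential wavefunction `Ψ_E(x) = e^{-|x|}` on `ℝ`
(with density `e^{-2|x|}`), the product `N_2(E)·N_2(Ẽ)` equals `8π/5`, strictly
below the Gaussian value `2π`. Here `Ψ̂_E` is the symmetric-convention Fourier
transform and `N_2` of a density `f` is `(∫ f²)⁻¹`. -/
theorem exponential_state_below_gaussian (Ψ : ℝ → ℝ)
    (hΨ : Ψ = fun x => Real.exp (-|x|))
    (F : ℝ → ℂ)
    (hF : F = fun (ξ : ℝ) => ((Real.sqrt (2 * Real.pi) : ℝ) : ℂ)⁻¹ *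
      ∫ x : ℝ, Complex.exp (-(Complex.I * (x : ℂ) * (ξ : ℂ))) * (Ψ x : ℂ)) :
    (∫ x : ℝ, (Ψ x ^ 2) ^ 2)⁻¹ * (∫ ξ : ℝ, (‖F ξ‖ ^ 2) ^ 2)⁻¹ = 8 * Real.pi / 5 ∧
    8 * Real.pi / 5 < 2 * Real.pi := by
  have hΨ4 : ∫ x, (Ψ x ^ 2) ^ 2 = 1 / 2 := by
    have h (x : ℝ) : (Ψ x ^ 2) ^ 2 = exp (-(4 * |x|)) := by
      rw [hΨ, ← pow_mul, ← Real.exp_nat_mul]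
      push_cast
      ring_nf
    simp_rw [h]
    rw [integral_exp_neg_mul_abs (by norm_num)]
    norm_num
  have hFξ (ξ : ℝ) : F ξ = ((√(2 * π))⁻¹ * (2 / (1 + ξ ^ 2)) : ℝ) := by
    have := integral_exp_neg_mul_abs_fourier one_pos ξ
    simp only [one_mul, one_pow, mul_one] at this
    simp only [hF, hΨ, this, Complex.ofReal_mul, Complex.ofReal_inv]
  have hF4 (ξ : ℝ) : (‖F ξ‖ ^ 2) ^ 2 = 4 / π ^ 2 * ((1 + ξ ^ 2) ^ 4)⁻¹ := by
    rw [hFξ, Complex.norm_of_nonneg (by positivity), mul_pow, inv_pow,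
      Real.sq_sqrt (by positivity)]
    field_simp
    ring
  have hFint : ∫ ξ, (‖F ξ‖ ^ 2) ^ 2 = 5 / (4 * π) := by
    simp_rw [hF4]
    rw [integral_const_mul, integral_inv_one_add_sq_pow_four]
    field_simp
    ring
  refine ⟨?_, by linarith [pi_pos]⟩
  rw [hΨ4, hFint]
  field_simp
  ring
end
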